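/- arXiv:1408.5518 — 4 statements merged into one kernel-verified Lean document; each statement's English description precedes it below -/
import Mathlib

section
/- Let F be a field, let α ∈ F be an element of multiplicative order n, and let r be a natural number with 1 ≤ r < n. If p is a nonzero polynomial over F with degree strictly less than n such that p(α^i) = 0 for every i ∈ {1, 2, …, r}, then p has at least r + 1 nonzero coefficients. -/
/-!
Let `m` be an exponent in the support of `p`. The polynomial `p(aX) - aᵐ p(X)` has coefficients
`p_j (aʲ - aᵐ)`, so it has exactly one term fewer than `p` when `k ↦ aᵏ` is injective on the
support, and it vanishes at `a¹, …, a^(r-1)` when `p` vanishes at `a¹, …, aʳ`. Induction on `r`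
then applies; `p` cannot be a single term since it has the nonzero root `a`.
-/

open Finset Polynomial

namespace Polynomial

variable {R : Type*} [CommRing R]

lemma coeff_comp_C_mul_X_sub_C_pow_mul (p : R[X]) (a : R) (m j : ℕ) :
    (p.comp (C a * X) - C (a ^ m) * p).coeff j = p.coeff j * (a ^ j - a ^ m) := by
  simp only [coeff_sub, comp_C_mul_X_coeff, coeff_C_mul]
  ring

lemma eval_comp_C_mul_X_sub_C_pow_mul (p : R[X]) (a x : R) (m : ℕ) :
    (p.comp (C a * X) - C (a ^ m) * p).eval x = p.eval (a * x) - a ^ m * p.eval x := by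
  simp

section IsDomain

variable [IsDomain R]

lemma eval_ne_zero_of_card_support_eq_one {p : R[X]} (hp : #p.support = 1) {a : R} (ha : a ≠ 0) :
    p.eval a ≠ 0 := by
  obtain ⟨k, c, hc, rfl⟩ := card_support_eq_one.mp hp
  simp [hc, ha]

lemma support_comp_C_mul_X_sub_C_pow_mul {p : R[X]} {a : R} (hinj : Set.InjOn (a ^ ·) p.support)
    {m : ℕ} (hm : m ∈ p.support) :
    (p.comp (C a * X) - C (a ^ m) * p).support = p.support.erase m := by
  ext j
  simp only [mem_support_iff, coeff_comp_C_mul_X_sub_C_pow_mul, mem_erase, ne_eq, mul_eq_zero,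
    sub_eq_zero, not_or]
  constructor
  · rintro ⟨hj, hjm⟩
    exact ⟨fun h => hjm (h ▸ rfl), hj⟩
  · rintro ⟨hjm, hj⟩
    exact ⟨hj, fun h => hjm (hinj (mem_support_iff.mpr hj) hm h)⟩

theorem add_one_le_card_support_of_eval_pow_eq_zero {p : R[X]} (hp : p ≠ 0) {a : R} (ha : a ≠ 0)
    (hinj : Set.InjOn (a ^ ·) p.support) {r : ℕ}
    (hroots : ∀ i, 1 ≤ i → i ≤ r → p.eval (a ^ i) = 0) :
    r + 1 ≤ #p.support := by
  induction r generalizing p with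
  | zero => simpa [Nat.one_le_iff_ne_zero] using hp
  | succ r ih =>
    obtain ⟨m, hm⟩ := support_nonempty.mpr hp
    set q := p.comp (C a * X) - C (a ^ m) * p
    have hq_support : q.support = p.support.erase m := support_comp_C_mul_X_sub_C_pow_mul hinj hm
    have hq_card : #q.support = #p.support - 1 := by rw [hq_support, card_erase_of_mem hm]
    have hp_card : #p.support ≠ 1 := fun h =>
      eval_ne_zero_of_card_support_eq_one h (pow_ne_zero 1 ha) (hroots 1 le_rfl (by omega))
    have hq : q ≠ 0 := by
      rw [← support_nonempty, ← card_pos, hq_card]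
      have := card_pos.mpr (support_nonempty.mpr hp)
      omega
    have hq_roots : ∀ i, 1 ≤ i → i ≤ r → q.eval (a ^ i) = 0 := fun i hi hir => by
      rw [eval_comp_C_mul_X_sub_C_pow_mul, ← pow_succ', hroots (i + 1) (by omega) (by omega),
        hroots i hi (by omega), mul_zero, sub_zero]
    have := ih hq (hinj.mono (by rw [hq_support]; exact erase_subset m p.support)) hq_roots
    omega

end IsDomain

end Polynomial

theorem bch_weight_bound_general {F : Type*} [Field F] (α : F) (n r : ℕ)
    (hn : orderOf α = n) (hrn : r < n)
    (p : Polynomial F) (hp : p ≠ 0) (hdeg : p.degree < (n : ℕ))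
    (hroots : ∀ i : ℕ, 1 ≤ i → i ≤ r → p.eval (α ^ i) = 0) :
    r + 1 ≤ p.support.card := by
  subst hn
  have hα : α ≠ 0 := by
    rintro rfl
    simp at hrn
  have hsupport : (p.support : Set ℕ) ⊆ Set.Iio (orderOf α) := fun k hk =>
    WithBot.coe_lt_coe.mp ((le_degree_of_mem_supp k hk).trans_lt hdeg)
  exact add_one_le_card_support_of_eval_pow_eq_zero hp hα (pow_injOn_Iio_orderOf.mono hsupport)
    hroots

/-- BCH-type minimum weight bound: if `α` has multiplicative order `n`,
`1 ≤ r < n`, and `p` is a nonzero polynomial of degree `< n` vanishing at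
`α^1, …, α^r`, then `p` has at least `r + 1` nonzero coefficients. -/
theorem bch_weight_bound {F : Type*} [Field F] (α : F) (n r : ℕ)
    (hn : orderOf α = n) (hr1 : 1 ≤ r) (hrn : r < n)
    (p : Polynomial F) (hp : p ≠ 0) (hdeg : p.degree < (n : ℕ))
    (hroots : ∀ i : ℕ, 1 ≤ i → i ≤ r → p.eval (α ^ i) = 0) :
    r + 1 ≤ p.support.card :=
  bch_weight_bound_general α n r hn hrn p hp hdeg hroots
end

section
/- Let F be a field, let α ∈ F be an element of multiplicative order n, let r be a natural number with 1 ≤ r < n, and let g = ∏_{i=1}^{r} (X − α^i). Then for any two distinct polynomials q₁, q₂ over F, each of degree strictly less than n − r, the coefficient vectors of q₁·g and q₂·g, viewed as functions Fin n → F (coefficient of X^j at position j), differ in at least r + 1 positions. -/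
/-!
A nonzero codeword `c = (q₂ - q₁) * g` has degree `< n = orderOf α` and vanishes at
`α, α², …, α^r`. If its support `{j₁, …, j_w}` had `w ≤ r` elements, the first `w` of these
conditions, `∑ₖ (c_{jₖ} α^{jₖ}) (α^{jₖ})^i = 0` for `i < w`, would be a Vandermonde system with
distinct nodes `α^{jₖ}` (distinct because `jₖ < orderOf α`) and a nonzero solution.
-/

open Polynomial Finset

namespace Polynomial

theorem hammingNorm_coeff_eq_card_support {R : Type*} [Semiring R] [DecidableEq R] {p : R[X]}
    {n : ℕ} (h : p.degree < n) : hammingNorm (fun j : Fin n => p.coeff j) = #p.support := by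
  refine card_bij (fun j _ => j) (fun j hj => by simpa using hj) (fun _ _ _ _ => Fin.ext) ?_
  intro j hj
  have hjn : j < n := by exact_mod_cast (le_degree_of_ne_zero (mem_support_iff.mp hj)).trans_lt h
  exact ⟨⟨j, hjn⟩, by simpa using hj, rfl⟩

theorem lt_card_support_of_eval_pow_eq_zero {F : Type*} [Field F] {α : F} {r : ℕ} {c : F[X]}
    (hc : c ≠ 0) (hdeg : c.natDegree < orderOf α)
    (hroots : ∀ i ∈ Icc 1 r, c.eval (α ^ i) = 0) : r < #c.support := by
  by_contra! hw
  set e := c.support.equivFin.symm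
  have hα : α ≠ 0 := by
    rintro rfl
    simp at hdeg
  have hinj : Function.Injective fun k => α ^ (e k : ℕ) := by
    intro a b hab
    have hlt : ∀ k, (e k : ℕ) < orderOf α := fun k =>
      (le_natDegree_of_mem_supp _ (e k).2).trans_lt hdeg
    exact e.injective (Subtype.ext (pow_injOn_Iio_orderOf (hlt a) (hlt b) hab))
  have hsum : ∀ i : Fin #c.support,
      ∑ k, c.coeff (e k) * α ^ (e k : ℕ) * (α ^ (e k : ℕ)) ^ (i : ℕ) = 0 := by
    intro i
    rw [← hroots (i + 1) (mem_Icc.mpr ⟨Nat.le_add_left _ _, by omega⟩), eval_eq_sum, sum_def,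
      ← Finset.sum_coe_sort c.support, ← e.sum_comp]
    refine sum_congr rfl fun k _ => ?_
    ring
  obtain ⟨j, hj⟩ := support_nonempty.mpr hc
  have := congrFun (Matrix.eq_zero_of_forall_pow_sum_mul_pow_eq_zero hinj hsum) (e.symm ⟨j, hj⟩)
  simp [mem_support_iff.mp hj, hα] at this

end Polynomial

theorem reed_solomon_min_distance_general {F : Type*} [Field F] [DecidableEq F]
    (α : F) (n r : ℕ)
    (hn : orderOf α = n)
    (g : Polynomial F)
    (hg : g = ∏ i ∈ Finset.Icc 1 r, (Polynomial.X - Polynomial.C (α ^ i)))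
    (q₁ q₂ : Polynomial F) (hq : q₁ ≠ q₂)
    (h₁ : q₁.degree < ((n - r : ℕ) : ℕ)) (h₂ : q₂.degree < ((n - r : ℕ) : ℕ)) :
    r + 1 ≤ hammingDist (fun j : Fin n => (q₁ * g).coeff j)
      (fun j : Fin n => (q₂ * g).coeff j) := by
  subst hn
  set c := (q₂ - q₁) * g
  have hq₂₁ : q₂ - q₁ ≠ 0 := sub_ne_zero.mpr hq.symm
  have hg₀ : g ≠ 0 := hg ▸ (monic_prod_of_monic _ _ fun i _ => monic_X_sub_C _).ne_zero
  have hc : c ≠ 0 := mul_ne_zero hq₂₁ hg₀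
  have hdeg : c.natDegree < orderOf α := by
    have hq_deg := (natDegree_lt_iff_degree_lt hq₂₁).mpr
      ((degree_sub_le q₂ q₁).trans_lt (max_lt h₂ h₁))
    have hg_deg : g.natDegree = r := by
      rw [hg, natDegree_finsetProd_X_sub_C_eq_card, Nat.card_Icc, Nat.add_sub_cancel]
    rw [natDegree_mul hq₂₁ hg₀, hg_deg]
    omega
  have hroots : ∀ i ∈ Icc 1 r, c.eval (α ^ i) = 0 := fun i hi => by
    simp [c, hg, eval_prod, prod_eq_zero hi]
  have hdist : hammingDist (fun j : Fin (orderOf α) => (q₁ * g).coeff j)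
      (fun j => (q₂ * g).coeff j) = hammingNorm (fun j : Fin (orderOf α) => c.coeff j) := by
    rw [hammingDist_eq_hammingNorm]
    congr 1 with j
    simp [c, sub_mul, neg_add_eq_sub]
  rw [hdist, hammingNorm_coeff_eq_card_support ((natDegree_lt_iff_degree_lt hc).mp hdeg)]
  exact lt_card_support_of_eval_pow_eq_zero hc hdeg hroots

/-- The Reed–Solomon code of block length `n` with generator polynomial
`g = ∏_{i=1}^r (X - α^i)` has minimum distance at least `r + 1`: the
coefficient vectors (in `Fin n → F`) of `q₁ * g` and `q₂ * g` for distinct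
messages `q₁ ≠ q₂` of degree `< n - r` differ in at least `r + 1` positions. -/
theorem reed_solomon_min_distance {F : Type*} [Field F] [DecidableEq F]
    (α : F) (n r : ℕ)
    (hn : orderOf α = n) (hr1 : 1 ≤ r) (hrn : r < n)
    (g : Polynomial F)
    (hg : g = ∏ i ∈ Finset.Icc 1 r, (Polynomial.X - Polynomial.C (α ^ i)))
    (q₁ q₂ : Polynomial F) (hq : q₁ ≠ q₂)
    (h₁ : q₁.degree < ((n - r : ℕ) : ℕ)) (h₂ : q₂.degree < ((n - r : ℕ) : ℕ)) :
    r + 1 ≤ hammingDist (fun j : Fin n => (q₁ * g).coeff j)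
      (fun j : Fin n => (q₂ * g).coeff j) :=
  reed_solomon_min_distance_general α n r hn g hg q₁ q₂ hq h₁ h₂
end

section
/- There exists a real constant δ > 0 such that for every sufficiently large natural number b there exists a multiplier m < 2^{3b} with the following property: for all distinct x, y ∈ [0, 2^b − 1], the 4b-bit binary representations of m·x and m·y (both products are less than 2^{4b}) differ in at least δ·b bit positions. -/
/-!
If the `4b`-bit expansions of `m x` and `m y` differ in at most `k` positions, then
`m (x - y)` is a signed sum `∑ ±2^i` over at most `k` positions `i < 4b`. There are at most
`∑_{j ≤ k} C(4b, j) 2^j ≤ 1026^(4b) / 1024^(4b - k) ≤ 2^(b + 10k)` such sums, and each one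
is of the form `m d` for at most one `m` once `d ≠ 0` is fixed. For `k = b/20`, fewer than
`2^b · 2^(b + 10k) ≤ 2^(3b)` multipliers are therefore bad for some `0 < d < 2^b`, so a good
`m < 2^(3b)` exists and gives distance `> b/20`.
-/

open Finset
open scoped symmDiff

namespace Nat

def bitSet (n v : ℕ) : Finset (Fin n) := {i | v.testBit i}

theorem sum_bitSet_two_pow {n v : ℕ} (hv : v < 2 ^ n) :
    ∑ i ∈ bitSet n v, 2 ^ (i : ℕ) = v := by
  have hmap : (bitSet n v).map Fin.valEmbedding = v.bitIndices.toFinset := by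
    ext i
    simp only [bitSet, mem_map, mem_filter, mem_univ, true_and, Fin.valEmbedding_apply,
      List.mem_toFinset, mem_bitIndices]
    refine ⟨fun ⟨j, hj, hji⟩ => hji ▸ hj, fun hi => ⟨⟨i, ?_⟩, hi, rfl⟩⟩
    by_contra! hni
    have := testBit_eq_false_of_lt (hv.trans_le (Nat.pow_le_pow_right two_pos hni))
    simp_all
  calc ∑ i ∈ bitSet n v, 2 ^ (i : ℕ)
        = ∑ i ∈ (bitSet n v).map Fin.valEmbedding, 2 ^ i := by rw [sum_map]; rfl
    _ = v := by rw [hmap, sum_toFinset_bitIndices_two_pow]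

theorem hammingDist_testBit (n u v : ℕ) :
    hammingDist (fun i : Fin n => v.testBit i) (fun i : Fin n => u.testBit i) =
      #(bitSet n v ∆ bitSet n u) := by
  unfold hammingDist bitSet
  congr 1
  ext i
  simp only [mem_filter, mem_univ, true_and, mem_symmDiff]
  cases v.testBit i <;> cases u.testBit i <;> decide

end Nat

def signedTwoPowSums (n k : ℕ) : Finset ℤ :=
  ((univ.filter fun s : Finset (Fin n) => #s ≤ k).sigma powerset).image
    fun p : (_ : Finset (Fin n)) × Finset (Fin n) =>
      ∑ i ∈ p.2, (2 : ℤ) ^ (i : ℕ) - ∑ i ∈ p.1 \ p.2, (2 : ℤ) ^ (i : ℕ)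

theorem sub_mem_signedTwoPowSums {n k u v : ℕ} (hu : u < 2 ^ n) (hv : v < 2 ^ n)
    (h : hammingDist (fun i : Fin n => v.testBit i) (fun i : Fin n => u.testBit i) ≤ k) :
    (v : ℤ) - u ∈ signedTwoPowSums n k := by
  set V := Nat.bitSet n v
  set U := Nat.bitSet n u
  rw [Nat.hammingDist_testBit] at h
  refine mem_image.mpr ⟨⟨V ∆ U, V \ U⟩, ?_, ?_⟩
  · simp only [mem_sigma, mem_filter, mem_univ, true_and, mem_powerset]
    exact ⟨h, fun i => by simp only [mem_symmDiff, mem_sdiff]; tauto⟩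
  · have hUV : V ∆ U \ (V \ U) = U \ V := by
      ext i; simp only [mem_symmDiff, mem_sdiff]; tauto
    rw [hUV, sum_sdiff_sub_sum_sdiff, ← Nat.sum_bitSet_two_pow hv, ← Nat.sum_bitSet_two_pow hu]
    push_cast
    rfl

theorem card_signedTwoPowSums_mul_pow_le (n k c : ℕ) (hc : 1 ≤ c) :
    #(signedTwoPowSums n k) * c ^ (n - k) ≤ (2 + c) ^ n := by
  calc #(signedTwoPowSums n k) * c ^ (n - k)
      ≤ (∑ s ∈ (univ.filter fun s : Finset (Fin n) => #s ≤ k), 2 ^ #s) * c ^ (n - k) := by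
        gcongr
        refine card_image_le.trans_eq ?_
        simp only [card_sigma, card_powerset]
    _ ≤ ∑ s ∈ (univ.filter fun s : Finset (Fin n) => #s ≤ k), 2 ^ #s * c ^ (n - #s) := by
        rw [sum_mul]
        gcongr with s hs
        exact (mem_filter.mp hs).2
    _ ≤ ∑ s : Finset (Fin n), 2 ^ #s * c ^ (n - #s) := sum_le_sum_of_subset (subset_univ _)
    _ = (2 + c) ^ n := Fin.sum_pow_mul_eq_add_pow 2 c

theorem exists_lt_forall_mul_notMem (D : Finset ℤ) {M N : ℕ} (h : (N - 1) * #D < M) :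
    ∃ m < M, ∀ d : ℕ, 0 < d → d < N → (m : ℤ) * d ∉ D := by
  let bad := (Ico 1 N).biUnion fun d : ℕ => (range M).filter fun m : ℕ => (m : ℤ) * d ∈ D
  have hbad : #bad < #(range M) := by
    refine lt_of_le_of_lt ?_ ((card_range M).symm ▸ h)
    refine card_biUnion_le.trans ?_
    rw [← Nat.card_Ico 1 N, ← smul_eq_mul, ← sum_const]
    refine sum_le_sum fun d hd => card_le_card_of_injOn (fun m => (m : ℤ) * d) ?_ ?_
    · intro m hm
      exact (mem_filter.mp hm).2
    · intro m₁ _ m₂ _ heq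
      have hd0 : (d : ℤ) ≠ 0 := by simp at hd; omega
      exact_mod_cast mul_right_cancel₀ hd0 heq
  obtain ⟨m, hm, hmbad⟩ := exists_mem_notMem_of_card_lt_card hbad
  refine ⟨m, mem_range.mp hm, fun d hd0 hdN hmd => hmbad ?_⟩
  exact mem_biUnion.mpr ⟨d, mem_Ico.mpr ⟨hd0, hdN⟩, mem_filter.mpr ⟨hm, hmd⟩⟩

theorem card_signedTwoPowSums_four_mul_le {b k : ℕ} (hk : k ≤ 4 * b) :
    #(signedTwoPowSums (4 * b) k) ≤ 2 ^ (b + 10 * k) := by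
  refine Nat.le_of_mul_le_mul_right (c := 1024 ^ (4 * b - k)) ?_ (by positivity)
  calc #(signedTwoPowSums (4 * b) k) * 1024 ^ (4 * b - k)
      ≤ (2 + 1024) ^ (4 * b) := card_signedTwoPowSums_mul_pow_le _ _ _ (by norm_num)
    _ ≤ (2 ^ 41) ^ b := by rw [pow_mul]; exact Nat.pow_le_pow_left (by norm_num) b
    _ = 2 ^ (b + 10 * k) * 1024 ^ (4 * b - k) := by
        rw [show (1024 : ℕ) = 2 ^ 10 by norm_num, ← pow_mul, ← pow_mul, ← pow_add]
        congr 1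
        omega

theorem two_pow_sub_one_mul_card_signedTwoPowSums_lt (b : ℕ) :
    (2 ^ b - 1) * #(signedTwoPowSums (4 * b) (b / 20)) < 2 ^ (3 * b) :=
  calc (2 ^ b - 1) * #(signedTwoPowSums (4 * b) (b / 20))
      < 2 ^ b * 2 ^ (b + 10 * (b / 20)) :=
        Nat.mul_lt_mul_of_lt_of_le (Nat.sub_lt (by positivity) one_pos)
          (card_signedTwoPowSums_four_mul_le (by omega)) (by positivity)
    _ ≤ 2 ^ (3 * b) := by rw [← pow_add]; exact Nat.pow_le_pow_right two_pos (by omega)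

/-- Miltersen's inner multiplier code: there is a constant `δ > 0` such that
for every sufficiently large `b` there is a multiplier `m < 2^(3*b)` for which
the `4*b`-bit binary representations of `m*x` and `m*y` differ in at least
`δ * b` positions, for all distinct `b`-bit numbers `x ≠ y`. -/
theorem multiplier_code_exists :
    ∃ δ : ℝ, 0 < δ ∧ ∀ᶠ b : ℕ in Filter.atTop,
      ∃ m : ℕ, m < 2 ^ (3 * b) ∧
        ∀ x y : ℕ, x < 2 ^ b → y < 2 ^ b → x ≠ y →
          δ * b ≤ (hammingDist (fun i : Fin (4 * b) => (m * x).testBit i)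
            (fun i : Fin (4 * b) => (m * y).testBit i) : ℝ) := by
  refine ⟨1 / 20, by norm_num, .of_forall fun b => ?_⟩
  obtain ⟨m, hm, hmul⟩ :=
    exists_lt_forall_mul_notMem _ (two_pow_sub_one_mul_card_signedTwoPowSums_lt b)
  have hcode : ∀ x < 2 ^ b, m * x < 2 ^ (4 * b) := fun x hx =>
    (Nat.mul_lt_mul'' hm hx).trans_eq (by ring)
  refine ⟨m, hm, fun x y hx hy hxy => ?_⟩
  wlog hyx : y < x generalizing x y
  · rw [hammingDist_comm]
    exact this y x hy hx hxy.symm (by omega)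
  set H := hammingDist (fun i : Fin (4 * b) => (m * x).testBit i)
    (fun i : Fin (4 * b) => (m * y).testBit i)
  have hdist : b / 20 < H := by
    by_contra! hle
    refine hmul (x - y) (by omega) (by omega) ?_
    convert sub_mem_signedTwoPowSums (hcode y hy) (hcode x hx) hle using 1
    push_cast [Nat.cast_sub hyx.le]
    ring
  have hb : (b : ℝ) ≤ 20 * H := by exact_mod_cast (by omega : b ≤ 20 * H)
  linarith
end

section
/- Let s, b, t be natural numbers with b ≤ s, let c : Fin t → ℕ satisfy c i < 2^b for all i, and let m be a natural number with m < 2^{s − b}. Then (∑_{i} c i · 2^{s·i}) · m = ∑_{i} (c i · m) · 2^{s·i}, and moreover for every i, the i-th base-2^s digit of the product is exactly c i · m; that is, ((∑_{j} c j · 2^{s·j}) · m) / 2^{s·i} mod 2^s = c i · m (with natural-number division and modulo). -/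
/-!
Distributing `m` over the sum turns the product into `∑ i, (c i * m) * (2 ^ s) ^ i`, and
`c i * m < 2 ^ b * 2 ^ (s - b) = 2 ^ s`. So this is a base-`2 ^ s` expansion whose digits are
the `c i * m`, and the digits of such an expansion are recovered by `/ (2 ^ s) ^ i % 2 ^ s`.
-/

theorem Nat.ofDigits_ofFn (B : ℕ) {t : ℕ} (d : Fin t → ℕ) :
    Nat.ofDigits B (List.ofFn d) = ∑ j, d j * B ^ (j : ℕ) := by
  induction t with
  | zero => simp
  | succ n ih =>
    rw [List.ofFn_succ, Nat.ofDigits_cons, ih, Fin.sum_univ_succ, Finset.mul_sum]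
    simp only [Fin.val_zero, pow_zero, mul_one, Fin.val_succ, pow_succ]
    congr 1
    exact Finset.sum_congr rfl fun j _ => by ring

theorem Nat.sum_mul_pow_div_pow_mod {B t : ℕ} (d : Fin t → ℕ) (hd : ∀ j, d j < B)
    (i : Fin t) : (∑ j, d j * B ^ (j : ℕ)) / B ^ (i : ℕ) % B = d i := by
  have hB : 0 < B := (Nat.zero_le _).trans_lt (hd i)
  have hdigits : ∀ l ∈ List.ofFn d, l < B := by
    simp only [List.mem_ofFn, forall_exists_index]
    rintro _ j rfl
    exact hd j
  have hi : (i : ℕ) < (List.ofFn d).length := by simp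
  rw [← Nat.ofDigits_ofFn, Nat.ofDigits_div_pow_eq_ofDigits_drop _ hB _ hdigits,
    List.drop_eq_getElem_cons hi, Nat.ofDigits_cons, List.getElem_ofFn,
    Nat.add_mul_mod_self_left, Nat.mod_eq_of_lt (hd i)]

/-- Word-parallel multiplication of spread fields: if the fields `c i < 2^b`
are placed at bit positions `s * i` with `b ≤ s`, and `m < 2^(s-b)`, then
multiplying the whole word by `m` multiplies each field independently, and the
`i`-th base-`2^s` digit of the product is exactly `c i * m`. -/
theorem parallel_field_multiplication (s b t : ℕ) (hb : b ≤ s)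
    (c : Fin t → ℕ) (hc : ∀ i, c i < 2 ^ b)
    (m : ℕ) (hm : m < 2 ^ (s - b)) :
    (∑ i, c i * 2 ^ (s * (i : ℕ))) * m = ∑ i, (c i * m) * 2 ^ (s * (i : ℕ)) ∧
    ∀ i : Fin t,
      ((∑ j, c j * 2 ^ (s * (j : ℕ))) * m) / 2 ^ (s * (i : ℕ)) % 2 ^ s
        = c i * m := by
  have hsum : (∑ i, c i * 2 ^ (s * (i : ℕ))) * m = ∑ i, (c i * m) * 2 ^ (s * (i : ℕ)) := by
    rw [Finset.sum_mul]
    exact Finset.sum_congr rfl fun i _ => mul_right_comm _ _ _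
  have hfield : ∀ j, c j * m < 2 ^ s := fun j =>
    calc c j * m < 2 ^ b * 2 ^ (s - b) := Nat.mul_lt_mul'' (hc j) hm
      _ = 2 ^ s := by rw [← pow_add, Nat.add_sub_cancel' hb]
  refine ⟨hsum, fun i => ?_⟩
  rw [hsum]
  simp only [pow_mul]
  exact Nat.sum_mul_pow_div_pow_mod (fun j => c j * m) hfield i
end
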